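/- Suppose n₀ > 3 and Υ₀ = n₀/(n₀+1). Define Z₂(u,v) = (uv)^{2/(n₀−1)} [ (n₀−5)/(n₀−1)² + 2v/((n₀+1)(n₀−1)) − v²/(2(n₀+1)²) − uv/(n₀+1)² ]. Then there is a constant κ depending only on n₀, with the same sign as n₀ − 5, such that along every solution (u(ξ), v(ξ)) of the Newtonian system with u > 0, v > 0: dZ₂/dξ = κ (uv)^{2/(n₀−1)} (2(n₀+1) − (n₀−1)v)². In particular Z₂ is monotone along solutions (strictly, away from v = 2(n₀+1)/(n₀−1)) when n₀ ≠ 5, and Z₂ is a first integral when n₀ = 5. -/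

import Mathlib

/-!
Along the Newtonian flow the logarithmic derivative of `u v` is
`(3 - u - Υ₀ v) + (u - 1 + (1 - Υ₀) v) = (2 (n₀ + 1) - (n₀ - 1) v) / (n₀ + 1)`,
which does not involve `u`. Hence `d/dξ ((u v)^p Q) = (u v)^p (p (u v)'/(u v) Q + Q')`,
and for `p = 2 / (n₀ - 1)` and the quadratic `Q` of `Z₂` the bracket is a polynomial identity:
the `u`-terms cancel and what remains is a constant multiple of `(2 (n₀ + 1) - (n₀ - 1) v)²`.
-/

open Set

noncomputable def Z2 (n₀ u v : ℝ) : ℝ :=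
  (u * v) ^ ((2 : ℝ) / (n₀ - 1)) *
    ((n₀ - 5) / (n₀ - 1) ^ 2 + 2 * v / ((n₀ + 1) * (n₀ - 1)) -
      v ^ 2 / (2 * (n₀ + 1) ^ 2) - u * v / (n₀ + 1) ^ 2)

noncomputable def z2Poly (n₀ u v : ℝ) : ℝ :=
  (n₀ - 5) / (n₀ - 1) ^ 2 + 2 * v / ((n₀ + 1) * (n₀ - 1)) -
    v ^ 2 / (2 * (n₀ + 1) ^ 2) - u * v / (n₀ + 1) ^ 2

noncomputable def z2Rate (n₀ : ℝ) : ℝ := (n₀ - 5) / ((n₀ + 1) ^ 2 * (n₀ - 1) ^ 3)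

theorem z2Rate_pos {n₀ : ℝ} (h : 5 < n₀) : 0 < z2Rate n₀ :=
  div_pos (by linarith) (mul_pos (by positivity) (pow_pos (by linarith) 3))

theorem z2Rate_neg {n₀ : ℝ} (h₁ : 1 < n₀) (h₅ : n₀ < 5) : z2Rate n₀ < 0 :=
  div_neg_of_neg_of_pos (by linarith) (mul_pos (by positivity) (pow_pos (by linarith) 3))

theorem HasDerivAt.rpow_const_of_eq_mul {f : ℝ → ℝ} {a x : ℝ} (p : ℝ)
    (hf : HasDerivAt f (f x * a) x) (hx : f x ≠ 0) :
    HasDerivAt (fun t => f t ^ p) (p * a * f x ^ p) x := by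
  refine (hf.rpow_const (p := p) (Or.inl hx)).congr_deriv ?_
  rw [Real.rpow_sub_one hx]
  field_simp

theorem hasDerivAt_z2Poly (n₀ : ℝ) {u v : ℝ → ℝ} {u' v' ξ : ℝ}
    (hu : HasDerivAt u u' ξ) (hv : HasDerivAt v v' ξ) :
    HasDerivAt (fun t => z2Poly n₀ (u t) (v t))
      (2 * v' / ((n₀ + 1) * (n₀ - 1)) - 2 * v ξ * v' / (2 * (n₀ + 1) ^ 2) -
        (u' * v ξ + u ξ * v') / (n₀ + 1) ^ 2) ξ := by
  have := ((((hasDerivAt_const ξ ((n₀ - 5) / (n₀ - 1) ^ 2)).add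
    ((hv.const_mul 2).div_const ((n₀ + 1) * (n₀ - 1)))).sub
    ((hv.pow 2).div_const (2 * (n₀ + 1) ^ 2))).sub ((hu.mul hv).div_const ((n₀ + 1) ^ 2)))
  refine this.congr_deriv ?_
  push_cast
  ring

theorem bracket_eq_z2Rate_mul_sq {n₀ : ℝ} (h₁ : n₀ - 1 ≠ 0) (h₂ : n₀ + 1 ≠ 0) (u v : ℝ) :
    2 / (n₀ - 1) * ((3 - u - n₀ / (n₀ + 1) * v) + (u - 1 + (1 - n₀ / (n₀ + 1)) * v)) *
          z2Poly n₀ u v +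
        (2 * (v * (u - 1 + (1 - n₀ / (n₀ + 1)) * v)) / ((n₀ + 1) * (n₀ - 1)) -
          2 * v * (v * (u - 1 + (1 - n₀ / (n₀ + 1)) * v)) / (2 * (n₀ + 1) ^ 2) -
          (u * (3 - u - n₀ / (n₀ + 1) * v) * v + u * (v * (u - 1 + (1 - n₀ / (n₀ + 1)) * v))) /
            (n₀ + 1) ^ 2) =
      z2Rate n₀ * (2 * (n₀ + 1) - (n₀ - 1) * v) ^ 2 := by
  simp only [z2Poly, z2Rate]
  field_simp
  ring

theorem hasDerivAt_Z2_of_newtonian {n₀ : ℝ} (h₁ : n₀ - 1 ≠ 0) (h₂ : n₀ + 1 ≠ 0)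
    {u v : ℝ → ℝ} {ξ : ℝ}
    (hu : HasDerivAt u (u ξ * (3 - u ξ - n₀ / (n₀ + 1) * v ξ)) ξ)
    (hv : HasDerivAt v (v ξ * (u ξ - 1 + (1 - n₀ / (n₀ + 1)) * v ξ)) ξ)
    (huv : u ξ * v ξ ≠ 0) :
    HasDerivAt (fun t => Z2 n₀ (u t) (v t))
      (z2Rate n₀ * (u ξ * v ξ) ^ ((2 : ℝ) / (n₀ - 1)) *
        (2 * (n₀ + 1) - (n₀ - 1) * v ξ) ^ 2) ξ := by
  have hw : HasDerivAt (fun t => u t * v t) (u ξ * v ξ *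
      ((3 - u ξ - n₀ / (n₀ + 1) * v ξ) + (u ξ - 1 + (1 - n₀ / (n₀ + 1)) * v ξ))) ξ :=
    (hu.mul hv).congr_deriv (by ring)
  have hZ := (hw.rpow_const_of_eq_mul (2 / (n₀ - 1)) huv).mul (hasDerivAt_z2Poly n₀ hu hv)
  refine hZ.congr_deriv ?_
  linear_combination
    (u ξ * v ξ) ^ ((2 : ℝ) / (n₀ - 1)) * bracket_eq_z2Rate_mul_sq h₁ h₂ (u ξ) (v ξ)

/-- For `n₀ > 3` there is a constant `κ` (depending only on `n₀`, with
the sign of `n₀ − 5`) such that along every positive solution of the Newtonian system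
(with `Υ₀ = n₀/(n₀+1)`) one has
`dZ₂/dξ = κ (uv)^{2/(n₀−1)} (2(n₀+1) − (n₀−1)v)²`.  In particular `Z₂` is monotone
along solutions when `n₀ ≠ 5` and is a first integral when `n₀ = 5`. -/
theorem stmt4
    (n₀ : ℝ) (hn₀ : 3 < n₀) :
    ∃ κ : ℝ,
      (5 < n₀ → 0 < κ) ∧ (n₀ < 5 → κ < 0) ∧ (n₀ = 5 → κ = 0) ∧
      ∀ u v : ℝ → ℝ,
        (∀ ξ : ℝ, HasDerivAt u (u ξ * (3 - u ξ - n₀ / (n₀ + 1) * v ξ)) ξ) →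
        (∀ ξ : ℝ, HasDerivAt v (v ξ * (u ξ - 1 + (1 - n₀ / (n₀ + 1)) * v ξ)) ξ) →
        (∀ ξ : ℝ, 0 < u ξ) → (∀ ξ : ℝ, 0 < v ξ) →
        (∀ ξ : ℝ,
          HasDerivAt (fun t => Z2 n₀ (u t) (v t))
            (κ * (u ξ * v ξ) ^ ((2 : ℝ) / (n₀ - 1)) *
              (2 * (n₀ + 1) - (n₀ - 1) * v ξ) ^ 2) ξ) ∧
        (5 < n₀ → Monotone (fun t => Z2 n₀ (u t) (v t))) ∧
        (n₀ < 5 → Antitone (fun t => Z2 n₀ (u t) (v t))) ∧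
        (n₀ = 5 → ∀ ξ₁ ξ₂ : ℝ, Z2 n₀ (u ξ₁) (v ξ₁) = Z2 n₀ (u ξ₂) (v ξ₂)) := by
  have h₁ : 0 < n₀ - 1 := by linarith
  have h₂ : 0 < n₀ + 1 := by linarith
  refine ⟨z2Rate n₀, z2Rate_pos, z2Rate_neg (by linarith), fun h => by simp [z2Rate, h],
    fun u v hu hv hu₀ hv₀ => ?_⟩
  have hZ ξ := hasDerivAt_Z2_of_newtonian h₁.ne' h₂.ne' (hu ξ) (hv ξ)
    (mul_pos (hu₀ ξ) (hv₀ ξ)).ne'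
  have hfactor ξ : 0 ≤ (u ξ * v ξ) ^ ((2 : ℝ) / (n₀ - 1)) *
      (2 * (n₀ + 1) - (n₀ - 1) * v ξ) ^ 2 :=
    mul_nonneg (Real.rpow_nonneg (mul_pos (hu₀ ξ) (hv₀ ξ)).le _) (sq_nonneg _)
  refine ⟨hZ, fun h => monotone_of_hasDerivAt_nonneg hZ fun ξ => ?_,
    fun h => antitone_of_hasDerivAt_nonpos hZ fun ξ => ?_, fun h ξ₁ ξ₂ => ?_⟩
  · rw [mul_assoc]
    exact mul_nonneg (z2Rate_pos h).le (hfactor ξ)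
  · rw [mul_assoc]
    exact mul_nonpos_of_nonpos_of_nonneg (z2Rate_neg (by linarith) h).le (hfactor ξ)
  · refine is_const_of_deriv_eq_zero (fun ξ => (hZ ξ).differentiableAt) (fun ξ => ?_) ξ₁ ξ₂
    rw [(hZ ξ).deriv, z2Rate, h]
    norm_num
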